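/- Let f(t,X,s,Y) be a smooth real function with X(t,s), Y(t,s) solving f_X = f_Y = 0, and set h(t,s) = f(t,X(t,s),s,Y(t,s)). If the 2×2 matrix Δ = (f_{XX}, f_{XY}; f_{XY}, f_{YY}) is positive definite at the point (t,X(t,s),s,Y(t,s)) and f_{tt} = -f_{XX} there, then h_{tt} < 0. -/

import Mathlib

open Matrix

/-- Partial derivative operators in the variables `t`, `X`, `s`, `Y` (in that argument order). -/
noncomputable def pdv : Fin 4 → (ℝ → ℝ → ℝ → ℝ → ℝ) → (ℝ → ℝ → ℝ → ℝ → ℝ) :=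
  ![fun f t X s Y => deriv (fun u => f u X s Y) t,
    fun f t X s Y => deriv (fun u => f t u s Y) X,
    fun f t X s Y => deriv (fun u => f t X u Y) s,
    fun f t X s Y => deriv (fun u => f t X s u) Y]

private lemma pdv0_eq (G : ℝ × ℝ × ℝ × ℝ → ℝ) (t X s Y : ℝ)
    (hG : DifferentiableAt ℝ G (t, X, s, Y)) :
    pdv 0 (fun t X s Y => G (t, X, s, Y)) t X s Y = fderiv ℝ G (t, X, s, Y) (1, 0, 0, 0) := by
  show deriv (fun u => G (u, X, s, Y)) t = _
  have hline : HasDerivAt (fun u => ((u, X, s, Y) : ℝ×ℝ×ℝ×ℝ)) (1, 0, 0, 0) t :=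
    HasDerivAt.prodMk (hasDerivAt_id t) (HasDerivAt.prodMk (hasDerivAt_const t X)
      (HasDerivAt.prodMk (hasDerivAt_const t s) (hasDerivAt_const t Y)))
  exact (hG.hasFDerivAt.comp_hasDerivAt t hline).deriv

private lemma pdv1_eq (G : ℝ × ℝ × ℝ × ℝ → ℝ) (t X s Y : ℝ)
    (hG : DifferentiableAt ℝ G (t, X, s, Y)) :
    pdv 1 (fun t X s Y => G (t, X, s, Y)) t X s Y = fderiv ℝ G (t, X, s, Y) (0, 1, 0, 0) := by
  show deriv (fun u => G (t, u, s, Y)) X = _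
  have hline : HasDerivAt (fun u => ((t, u, s, Y) : ℝ×ℝ×ℝ×ℝ)) (0, 1, 0, 0) X :=
    HasDerivAt.prodMk (hasDerivAt_const X t) (HasDerivAt.prodMk (hasDerivAt_id X)
      (HasDerivAt.prodMk (hasDerivAt_const X s) (hasDerivAt_const X Y)))
  exact (hG.hasFDerivAt.comp_hasDerivAt X hline).deriv

private lemma pdv3_eq (G : ℝ × ℝ × ℝ × ℝ → ℝ) (t X s Y : ℝ)
    (hG : DifferentiableAt ℝ G (t, X, s, Y)) :
    pdv 3 (fun t X s Y => G (t, X, s, Y)) t X s Y = fderiv ℝ G (t, X, s, Y) (0, 0, 0, 1) := by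
  show deriv (fun u => G (t, X, s, u)) Y = _
  have hline : HasDerivAt (fun u => ((t, X, s, u) : ℝ×ℝ×ℝ×ℝ)) (0, 0, 0, 1) Y :=
    HasDerivAt.prodMk (hasDerivAt_const Y t) (HasDerivAt.prodMk (hasDerivAt_const Y X)
      (HasDerivAt.prodMk (hasDerivAt_const Y s) (hasDerivAt_id Y)))
  exact (hG.hasFDerivAt.comp_hasDerivAt Y hline).deriv

private lemma hasDerivAt_comp4 {G : ℝ×ℝ×ℝ×ℝ → ℝ} {x y : ℝ → ℝ} {s₀ b a c : ℝ}
    (hG : DifferentiableAt ℝ G (b, x b, s₀, y b))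
    (hx : HasDerivAt x a b) (hy : HasDerivAt y c b) :
    HasDerivAt (fun u => G (u, x u, s₀, y u))
      (fderiv ℝ G (b, x b, s₀, y b) (1, a, 0, c)) b := by
  have hγ : HasDerivAt (fun u => ((u, x u, s₀, y u) : ℝ×ℝ×ℝ×ℝ)) (1, a, 0, c) b :=
    HasDerivAt.prodMk (hasDerivAt_id b) (HasDerivAt.prodMk hx (HasDerivAt.prodMk (hasDerivAt_const b s₀) hy))
  exact hG.hasFDerivAt.comp_hasDerivAt b hγ

private lemma lin_dec (L : ℝ×ℝ×ℝ×ℝ →L[ℝ] ℝ) (a c : ℝ) :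
    L (1, a, 0, c) = L (1,0,0,0) + a * L (0,1,0,0) + c * L (0,0,0,1) := by
  have h : ((1, a, 0, c) : ℝ×ℝ×ℝ×ℝ)
      = (1,0,0,0) + a • ((0,1,0,0) : ℝ×ℝ×ℝ×ℝ) + c • ((0,0,0,1) : ℝ×ℝ×ℝ×ℝ) := by
    simp [Prod.ext_iff]
  rw [h, map_add, map_add, L.map_smul, L.map_smul, smul_eq_mul, smul_eq_mul]

private lemma fderiv_eval (F : ℝ×ℝ×ℝ×ℝ → ℝ) (hF : ContDiff ℝ (⊤ : ℕ∞) F) (q v w : ℝ×ℝ×ℝ×ℝ) :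
    fderiv ℝ (fun p => fderiv ℝ F p w) q v = fderiv ℝ (fderiv ℝ F) q v w := by
  have hd : DifferentiableAt ℝ (fderiv ℝ F) q :=
    ((hF.fderiv_right (m := (⊤ : ℕ∞)) (by simp)).differentiable (by simp)) q
  have : fderiv ℝ (fun p => (ContinuousLinearMap.apply ℝ ℝ w) (fderiv ℝ F p)) q
      = (ContinuousLinearMap.apply ℝ ℝ w).comp (fderiv ℝ (fderiv ℝ F) q) := by
    have := fderiv_comp (𝕜 := ℝ) (g := (ContinuousLinearMap.apply ℝ ℝ w))
      (f := fderiv ℝ F) q (ContinuousLinearMap.apply ℝ ℝ w).differentiableAt hd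
    rw [ContinuousLinearMap.fderiv] at this
    exact this
  have h2 := congrArg (fun (L : (ℝ×ℝ×ℝ×ℝ) →L[ℝ] ℝ) => L v) this
  simpa using h2

set_option maxHeartbeats 2000000 in
private lemma core (F : ℝ×ℝ×ℝ×ℝ → ℝ) (x y : ℝ → ℝ) (s₀ t₀ : ℝ)
    (hF : ContDiff ℝ (⊤ : ℕ∞) F) (hx : Differentiable ℝ x) (hy : Differentiable ℝ y)
    (hfX : ∀ b : ℝ, fderiv ℝ F (b, x b, s₀, y b) (0,1,0,0) = 0)
    (hfY : ∀ b : ℝ, fderiv ℝ F (b, x b, s₀, y b) (0,0,0,1) = 0)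
    (hpos : 0 < fderiv ℝ (fderiv ℝ F) (t₀, x t₀, s₀, y t₀) (0,1,0,0) (0,1,0,0))
    (hquad : 0 ≤ deriv x t₀ * (fderiv ℝ (fderiv ℝ F) (t₀, x t₀, s₀, y t₀) (0,1,0,0) (0,1,0,0) * deriv x t₀
        + fderiv ℝ (fderiv ℝ F) (t₀, x t₀, s₀, y t₀) (0,1,0,0) (0,0,0,1) * deriv y t₀)
      + deriv y t₀ * (fderiv ℝ (fderiv ℝ F) (t₀, x t₀, s₀, y t₀) (0,0,0,1) (0,1,0,0) * deriv x t₀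
        + fderiv ℝ (fderiv ℝ F) (t₀, x t₀, s₀, y t₀) (0,0,0,1) (0,0,0,1) * deriv y t₀))
    (heq2 : fderiv ℝ (fderiv ℝ F) (t₀, x t₀, s₀, y t₀) (1,0,0,0) (1,0,0,0)
      = - fderiv ℝ (fderiv ℝ F) (t₀, x t₀, s₀, y t₀) (0,1,0,0) (0,1,0,0)) :
    deriv (fun a : ℝ => deriv (fun b : ℝ => F (b, x b, s₀, y b)) a) t₀ < 0 := by
  have hFd : Differentiable ℝ F := hF.differentiable (by simp)
  have hF' : ContDiff ℝ (⊤ : ℕ∞) (fderiv ℝ F) := hF.fderiv_right (by simp)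
  have hF'd : Differentiable ℝ (fderiv ℝ F) := hF'.differentiable (by simp)
  set A := deriv x t₀ with hA
  set C := deriv y t₀ with hC
  set P : ℝ×ℝ×ℝ×ℝ := (t₀, x t₀, s₀, y t₀) with hPdef
  have hGd : ∀ w : ℝ×ℝ×ℝ×ℝ, Differentiable ℝ (fun q => fderiv ℝ F q w) := fun w q =>
    ((ContinuousLinearMap.apply ℝ ℝ w).differentiableAt).comp q (hF'd q)
  -- first derivative
  have hstep1 : (fun b : ℝ => deriv (fun u : ℝ => F (u, x u, s₀, y u)) b)
      = fun b => fderiv ℝ F (b, x b, s₀, y b) (1,0,0,0) := by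
    funext b
    rw [(hasDerivAt_comp4 (hFd _) (hx b).hasDerivAt (hy b).hasDerivAt).deriv, lin_dec,
      hfX b, hfY b]
    ring
  -- second derivative
  have hgoal : deriv (fun a : ℝ => deriv (fun b : ℝ => F (b, x b, s₀, y b)) a) t₀
      = fderiv ℝ (fun q => fderiv ℝ F q (1,0,0,0)) P (1, A, 0, C) := by
    rw [hstep1]
    exact (hasDerivAt_comp4 (G := fun q => fderiv ℝ F q (1,0,0,0))
      (hGd _ _) (hx t₀).hasDerivAt (hy t₀).hasDerivAt).deriv
  rw [lin_dec, fderiv_eval F hF, fderiv_eval F hF, fderiv_eval F hF] at hgoal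
  -- implicit function equations
  have heqX : fderiv ℝ (fderiv ℝ F) P (1,0,0,0) (0,1,0,0)
      + A * fderiv ℝ (fderiv ℝ F) P (0,1,0,0) (0,1,0,0)
      + C * fderiv ℝ (fderiv ℝ F) P (0,0,0,1) (0,1,0,0) = 0 := by
    have h := (hasDerivAt_comp4 (G := fun q => fderiv ℝ F q (0,1,0,0)) (s₀ := s₀)
      (hGd _ _) (hx t₀).hasDerivAt (hy t₀).hasDerivAt).deriv
    rw [lin_dec, fderiv_eval F hF, fderiv_eval F hF, fderiv_eval F hF] at h
    rw [← h]
    have hc : (fun u : ℝ => fderiv ℝ F (u, x u, s₀, y u) ((0,1,0,0) : ℝ×ℝ×ℝ×ℝ))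
        = fun _ => (0:ℝ) := funext fun u => hfX u
    rw [hc, deriv_const]
  have heqY : fderiv ℝ (fderiv ℝ F) P (1,0,0,0) (0,0,0,1)
      + A * fderiv ℝ (fderiv ℝ F) P (0,1,0,0) (0,0,0,1)
      + C * fderiv ℝ (fderiv ℝ F) P (0,0,0,1) (0,0,0,1) = 0 := by
    have h := (hasDerivAt_comp4 (G := fun q => fderiv ℝ F q (0,0,0,1)) (s₀ := s₀)
      (hGd _ _) (hx t₀).hasDerivAt (hy t₀).hasDerivAt).deriv
    rw [lin_dec, fderiv_eval F hF, fderiv_eval F hF, fderiv_eval F hF] at h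
    rw [← h]
    have hc : (fun u : ℝ => fderiv ℝ F (u, x u, s₀, y u) ((0,0,0,1) : ℝ×ℝ×ℝ×ℝ))
        = fun _ => (0:ℝ) := funext fun u => hfY u
    rw [hc, deriv_const]
  -- symmetry of second derivative
  have hsym := (hF.contDiffAt (x := P)).isSymmSndFDerivAt (by rw [minSmoothness_of_isRCLikeNormedField]; exact WithTop.coe_le_coe.mpr (le_top : (2:ℕ∞) ≤ ⊤))
  have s1 := hsym (0,1,0,0) (1,0,0,0)
  have s3 := hsym (0,0,0,1) (1,0,0,0)
  have s13 := hsym (0,0,0,1) (0,1,0,0)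
  have eX2 := mul_eq_zero_of_right A heqX
  have eY2 := mul_eq_zero_of_right C heqY
  rw [hgoal, s1, s3, heq2]
  nlinarith [hquad, hpos, eX2, eY2, s13]
/-- The `2×2` matrix `Δ = (f_XX, f_XY; f_XY, f_YY)`. -/
noncomputable def deltaMat (f : ℝ → ℝ → ℝ → ℝ → ℝ) (t X s Y : ℝ) :
    Matrix (Fin 2) (Fin 2) ℝ :=
  !![pdv 1 (pdv 1 f) t X s Y, pdv 1 (pdv 3 f) t X s Y;
     pdv 3 (pdv 1 f) t X s Y, pdv 3 (pdv 3 f) t X s Y]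

set_option maxHeartbeats 2000000 in
/-- For smooth `f` and implicit solutions `X(t,s)`, `Y(t,s)` of `f_X = f_Y = 0`, with
`h(t,s) = f(t,X(t,s),s,Y(t,s))`: if `Δ` is positive definite and `f_tt = -f_XX` at the
point, then `h_tt < 0` there. -/
theorem h_tt_neg (f : ℝ → ℝ → ℝ → ℝ → ℝ) (Xf Yf : ℝ → ℝ → ℝ)
    (hf : ContDiff ℝ (⊤ : ℕ∞) fun p : ℝ × ℝ × ℝ × ℝ => f p.1 p.2.1 p.2.2.1 p.2.2.2)
    (hXf : ContDiff ℝ (⊤ : ℕ∞) fun p : ℝ × ℝ => Xf p.1 p.2)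
    (hYf : ContDiff ℝ (⊤ : ℕ∞) fun p : ℝ × ℝ => Yf p.1 p.2)
    (hfX : ∀ t s : ℝ, pdv 1 f t (Xf t s) s (Yf t s) = 0)
    (hfY : ∀ t s : ℝ, pdv 3 f t (Xf t s) s (Yf t s) = 0)
    (t₀ s₀ : ℝ)
    (hΔ : (deltaMat f t₀ (Xf t₀ s₀) s₀ (Yf t₀ s₀)).PosDef)
    (heq : pdv 0 (pdv 0 f) t₀ (Xf t₀ s₀) s₀ (Yf t₀ s₀)
            = -pdv 1 (pdv 1 f) t₀ (Xf t₀ s₀) s₀ (Yf t₀ s₀)) :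
    deriv (fun a : ℝ => deriv (fun b : ℝ => f b (Xf b s₀) s₀ (Yf b s₀)) a) t₀ < 0 := by
  have hF : ContDiff ℝ (⊤ : ℕ∞) (fun p : ℝ × ℝ × ℝ × ℝ => f p.1 p.2.1 p.2.2.1 p.2.2.2) := hf
  set F : ℝ × ℝ × ℝ × ℝ → ℝ := fun p => f p.1 p.2.1 p.2.2.1 p.2.2.2 with hFdef
  have hFd : Differentiable ℝ F := hF.differentiable (by simp)
  have hF' : ContDiff ℝ (⊤ : ℕ∞) (fderiv ℝ F) := hF.fderiv_right (by simp)
  have hF'd : Differentiable ℝ (fderiv ℝ F) := hF'.differentiable (by simp)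
  have hGd : ∀ w : ℝ×ℝ×ℝ×ℝ, Differentiable ℝ (fun q => fderiv ℝ F q w) := fun w q =>
    ((ContinuousLinearMap.apply ℝ ℝ w).differentiableAt).comp q (hF'd q)
  have hx : Differentiable ℝ (fun u : ℝ => Xf u s₀) :=
    (hXf.comp (ContDiff.prodMk (contDiff_id (E := ℝ)) contDiff_const)).differentiable (by simp)
  have hy : Differentiable ℝ (fun u : ℝ => Yf u s₀) :=
    (hYf.comp (ContDiff.prodMk (contDiff_id (E := ℝ)) contDiff_const)).differentiable (by simp)
  -- rewrite the four second-order pdv entries at the base point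
  have hp1 : pdv 1 f = fun t X s Y => fderiv ℝ F (t, X, s, Y) (0,1,0,0) := by
    funext t X s Y; exact pdv1_eq F t X s Y (hFd _)
  have hp3 : pdv 3 f = fun t X s Y => fderiv ℝ F (t, X, s, Y) (0,0,0,1) := by
    funext t X s Y; exact pdv3_eq F t X s Y (hFd _)
  have hp0 : pdv 0 f = fun t X s Y => fderiv ℝ F (t, X, s, Y) (1,0,0,0) := by
    funext t X s Y; exact pdv0_eq F t X s Y (hFd _)
  set P : ℝ×ℝ×ℝ×ℝ := (t₀, Xf t₀ s₀, s₀, Yf t₀ s₀) with hPdef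
  have E00 : pdv 0 (pdv 0 f) t₀ (Xf t₀ s₀) s₀ (Yf t₀ s₀)
      = fderiv ℝ (fderiv ℝ F) P (1,0,0,0) (1,0,0,0) := by
    rw [hp0, ← fderiv_eval F hF]
    exact pdv0_eq (fun q => fderiv ℝ F q (1,0,0,0)) t₀ (Xf t₀ s₀) s₀ (Yf t₀ s₀) (hGd _ _)
  have E11 : pdv 1 (pdv 1 f) t₀ (Xf t₀ s₀) s₀ (Yf t₀ s₀)
      = fderiv ℝ (fderiv ℝ F) P (0,1,0,0) (0,1,0,0) := by
    rw [hp1, ← fderiv_eval F hF]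
    exact pdv1_eq (fun q => fderiv ℝ F q (0,1,0,0)) t₀ (Xf t₀ s₀) s₀ (Yf t₀ s₀) (hGd _ _)
  have E13 : pdv 1 (pdv 3 f) t₀ (Xf t₀ s₀) s₀ (Yf t₀ s₀)
      = fderiv ℝ (fderiv ℝ F) P (0,1,0,0) (0,0,0,1) := by
    rw [hp3, ← fderiv_eval F hF]
    exact pdv1_eq (fun q => fderiv ℝ F q (0,0,0,1)) t₀ (Xf t₀ s₀) s₀ (Yf t₀ s₀) (hGd _ _)
  have E31 : pdv 3 (pdv 1 f) t₀ (Xf t₀ s₀) s₀ (Yf t₀ s₀)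
      = fderiv ℝ (fderiv ℝ F) P (0,0,0,1) (0,1,0,0) := by
    rw [hp1, ← fderiv_eval F hF]
    exact pdv3_eq (fun q => fderiv ℝ F q (0,1,0,0)) t₀ (Xf t₀ s₀) s₀ (Yf t₀ s₀) (hGd _ _)
  have E33 : pdv 3 (pdv 3 f) t₀ (Xf t₀ s₀) s₀ (Yf t₀ s₀)
      = fderiv ℝ (fderiv ℝ F) P (0,0,0,1) (0,0,0,1) := by
    rw [hp3, ← fderiv_eval F hF]
    exact pdv3_eq (fun q => fderiv ℝ F q (0,0,0,1)) t₀ (Xf t₀ s₀) s₀ (Yf t₀ s₀) (hGd _ _)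
  have hM : deltaMat f t₀ (Xf t₀ s₀) s₀ (Yf t₀ s₀)
      = !![fderiv ℝ (fderiv ℝ F) P (0,1,0,0) (0,1,0,0),
           fderiv ℝ (fderiv ℝ F) P (0,1,0,0) (0,0,0,1);
           fderiv ℝ (fderiv ℝ F) P (0,0,0,1) (0,1,0,0),
           fderiv ℝ (fderiv ℝ F) P (0,0,0,1) (0,0,0,1)] := by
    rw [deltaMat, E11, E13, E31, E33]
  rw [hM] at hΔ
  -- positivity facts
  have hpos : 0 < fderiv ℝ (fderiv ℝ F) P (0,1,0,0) (0,1,0,0) := by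
    have h := hΔ.dotProduct_mulVec_pos (x := ![1, 0]) (by
      intro hcon
      have := congrFun hcon 0
      norm_num at this)
    simpa [Matrix.mulVec, dotProduct, Fin.sum_univ_two, -Prod.mk_zero_zero] using h
  set A := deriv (fun u : ℝ => Xf u s₀) t₀ with hA
  set C := deriv (fun u : ℝ => Yf u s₀) t₀ with hC
  have hquad : 0 ≤ A * (fderiv ℝ (fderiv ℝ F) P (0,1,0,0) (0,1,0,0) * A
        + fderiv ℝ (fderiv ℝ F) P (0,1,0,0) (0,0,0,1) * C)
      + C * (fderiv ℝ (fderiv ℝ F) P (0,0,0,1) (0,1,0,0) * A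
        + fderiv ℝ (fderiv ℝ F) P (0,0,0,1) (0,0,0,1) * C) := by
    have h := hΔ.posSemidef.dotProduct_mulVec_nonneg ![A, C]
    simp [Matrix.mulVec, dotProduct, Fin.sum_univ_two, -Prod.mk_zero_zero] at h
    nlinarith [h]
  -- implicit equations
  have hfX' : ∀ b : ℝ, fderiv ℝ F (b, Xf b s₀, s₀, Yf b s₀) (0,1,0,0) = 0 := by
    intro b
    have := hfX b s₀
    rw [hp1] at this
    exact this
  have hfY' : ∀ b : ℝ, fderiv ℝ F (b, Xf b s₀, s₀, Yf b s₀) (0,0,0,1) = 0 := by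
    intro b
    have := hfY b s₀
    rw [hp3] at this
    exact this
  have heq2 : fderiv ℝ (fderiv ℝ F) P (1,0,0,0) (1,0,0,0)
      = - fderiv ℝ (fderiv ℝ F) P (0,1,0,0) (0,1,0,0) := by
    rw [← E00, ← E11]; exact heq
  exact core F (fun u => Xf u s₀) (fun u => Yf u s₀) s₀ t₀ hF hx hy hfX' hfY' hpos hquad heq2
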